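/- Let u, v : ℝ^d → ℝ be functions such that u and −v are K-semi-concave (i.e., u(y) − K‖y‖² and −v(y) − K‖y‖² are concave). If x₀ is a point of minimum of u − v, then u and v are differentiable at x₀ and du_{x₀} = dv_{x₀}. -/

import Mathlib

set_option maxHeartbeats 1000000

open scoped RealInnerProductSpace

/-- A concave function on a finite-dimensional real normed space has a
supergradient at every point. -/
lemma exists_supergradient {E : Type*} [NormedAddCommGroup E] [NormedSpace ℝ E]
    [FiniteDimensional ℝ E] {f : E → ℝ} (hf : ConcaveOn ℝ Set.univ f) (x₀ : E) :
    ∃ p : E →L[ℝ] ℝ, ∀ y, f y ≤ f x₀ + p (y - x₀) := by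
  have hcont : Continuous f := hf.locallyLipschitz.continuous
  set S : Set (E × ℝ) := {q | q.2 < f q.1} with hS
  have hSconv : Convex ℝ S := by
    have h := hf.convex_strict_hypograph
    have : {p : E × ℝ | p.1 ∈ Set.univ ∧ p.2 < f p.1} = S := by
      ext q; simp [hS]
    rwa [this] at h
  have hSopen : IsOpen S := isOpen_lt continuous_snd (hcont.comp continuous_fst)
  have hnot : (x₀, f x₀) ∉ S := by simp [hS]
  obtain ⟨ℓ, hℓ⟩ := geometric_hahn_banach_open_point hSconv hSopen hnot
  set a : ℝ := ℓ (0, 1) with ha_def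
  have hdec : ∀ (z : E) (t : ℝ), ℓ (z, t) = ℓ (z, 0) + t * a := by
    intro z t
    have h1 : (z, t) = (z, (0:ℝ)) + t • ((0:E), (1:ℝ)) := by
      simp [Prod.ext_iff]
    rw [h1, map_add, map_smul, smul_eq_mul]
  have ha : 0 < a := by
    have h1 := hℓ (x₀, f x₀ - 1) (by simp [hS])
    rw [hdec x₀ (f x₀ - 1), hdec x₀ (f x₀)] at h1
    nlinarith
  refine ⟨(-a⁻¹) • ℓ.comp (ContinuousLinearMap.inl ℝ E ℝ), fun y => ?_⟩
  have happ : ((-a⁻¹) • ℓ.comp (ContinuousLinearMap.inl ℝ E ℝ)) (y - x₀)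
      = -a⁻¹ * (ℓ (y, 0) - ℓ (x₀, 0)) := by
    have : ((y - x₀ : E), (0:ℝ)) = (y, (0:ℝ)) - (x₀, (0:ℝ)) := by simp [Prod.ext_iff]
    simp [ContinuousLinearMap.smul_apply, this, map_sub]
    ring
  rw [happ]
  refine le_of_forall_sub_le fun ε hε => ?_
  have h1 := hℓ (y, f y - ε) (by simp [hS, hε])
  rw [hdec y (f y - ε), hdec x₀ (f x₀)] at h1
  -- ℓ(y,0) + (f y - ε) * a < ℓ(x₀,0) + f x₀ * a
  have h2 : (f y - ε - f x₀ - (-a⁻¹ * (ℓ (y, 0) - ℓ (x₀, 0)))) * a ≤ 0 := by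
    have hinv : a⁻¹ * a = 1 := inv_mul_cancel₀ ha.ne'
    have e : (f y - ε - f x₀ - (-a⁻¹ * (ℓ (y, 0) - ℓ (x₀, 0)))) * a
        = ((f y - ε) * a - f x₀ * a) + (ℓ (y, 0) - ℓ (x₀, 0)) * (a⁻¹ * a) := by ring
    rw [hinv, mul_one] at e
    rw [e]; linarith
  have h3 := le_of_mul_le_mul_right
    (by linarith [h2] :
      (f y - ε - f x₀ - (-a⁻¹ * (ℓ (y, 0) - ℓ (x₀, 0)))) * a ≤ 0 * a) ha
  linarith

/-- A continuous linear functional bounded below by a (negative) quadratic is zero. -/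
lemma clm_eq_zero_of_quadratic_lower {E : Type*} [NormedAddCommGroup E] [NormedSpace ℝ E]
    {s : E →L[ℝ] ℝ} {C : ℝ} (h : ∀ y : E, -(C * ‖y‖ ^ 2) ≤ s y) : s = 0 := by
  have h' : ∀ y : E, -(|C| * ‖y‖ ^ 2) ≤ s y := by
    intro y
    refine le_trans ?_ (h y)
    nlinarith [le_abs_self C, sq_nonneg ‖y‖]
  ext y
  simp only [ContinuousLinearMap.zero_apply]
  have key : ∀ t : ℝ, 0 < t → |s y| ≤ |C| * t * ‖y‖ ^ 2 := by
    intro t ht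
    have h1 := h' (t • y)
    have h2 := h' (-(t • y))
    rw [map_smul, smul_eq_mul, norm_smul] at h1
    rw [map_neg, map_smul, smul_eq_mul, norm_neg, norm_smul] at h2
    have hnt : ‖t‖ = t := abs_of_pos ht
    rw [hnt] at h1 h2
    rw [abs_le]
    constructor
    · nlinarith
    · nlinarith
  have habs : |s y| ≤ 0 := by
    by_contra hcon
    push_neg at hcon
    set A := |C| * ‖y‖ ^ 2 with hA
    have hA0 : 0 ≤ A := by positivity
    have ht : (0:ℝ) < |s y| / (2 * (A + 1)) := by positivity
    have := key _ ht
    rw [show |C| * (|s y| / (2 * (A + 1))) * ‖y‖ ^ 2 = A * |s y| / (2 * (A + 1)) by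
      rw [hA]; ring] at this
    have hne : (2 * (A + 1)) ≠ 0 := by positivity
    have h6 := mul_le_mul_of_nonneg_right this (by positivity : (0:ℝ) ≤ 2 * (A + 1))
    rw [div_mul_cancel₀ _ hne] at h6
    nlinarith
  have := abs_nonneg (s y)
  have : |s y| = 0 := le_antisymm habs this
  exact abs_eq_zero.mp this

/-- Squeeze: a function trapped within a quadratic error of an affine function is
differentiable. -/
lemma hasFDerivAt_of_quadratic_bound {E : Type*} [NormedAddCommGroup E] [NormedSpace ℝ E]
    {f : E → ℝ} {p : E →L[ℝ] ℝ} {x₀ : E} {C : ℝ}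
    (h : ∀ y, |f y - f x₀ - p (y - x₀)| ≤ C * ‖y - x₀‖ ^ 2) :
    HasFDerivAt f p x₀ := by
  rw [hasFDerivAt_iff_isLittleO_nhds_zero]
  rw [Asymptotics.isLittleO_iff]
  intro c hc
  set C' : ℝ := max C 0 with hC'
  have hC'0 : 0 ≤ C' := le_max_right _ _
  have hr : (0:ℝ) < c / (C' + 1) := by positivity
  have hev : ∀ᶠ z : E in nhds 0, ‖z‖ < c / (C' + 1) := by
    have := Metric.ball_mem_nhds (0 : E) hr
    filter_upwards [this] with z hz
    simpa [dist_eq_norm] using hz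
  filter_upwards [hev] with z hz
  have h1 := h (x₀ + z)
  rw [add_sub_cancel_left] at h1
  have h2 : |f (x₀ + z) - f x₀ - p z| ≤ C' * ‖z‖ ^ 2 := by
    refine h1.trans ?_
    nlinarith [sq_nonneg ‖z‖, le_max_left C (0:ℝ)]
  have h3 : C' * ‖z‖ ^ 2 ≤ c * ‖z‖ := by
    have hn : 0 ≤ ‖z‖ := norm_nonneg z
    have : C' * ‖z‖ ≤ c := by
      rcases eq_or_lt_of_le hn with h0 | h0
      · rw [← h0]; simpa using hc.le
      · have : ‖z‖ < c / (C' + 1) := hz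
        rw [lt_div_iff₀ (by positivity)] at this
        nlinarith
    nlinarith
  calc ‖f (x₀ + z) - f x₀ - p z‖ = |f (x₀ + z) - f x₀ - p z| := rfl
    _ ≤ C' * ‖z‖ ^ 2 := h2
    _ ≤ c * ‖z‖ := h3

/-- If `u` and `-v` are `K`-semi-concave on `ℝ^d` (i.e. `u(y) - K‖y‖²` and
`-v(y) - K‖y‖²` are concave) and `x₀` is a point of minimum of `u - v`, then
`u` and `v` are differentiable at `x₀` and `du_{x₀} = dv_{x₀}`. -/
theorem stmt_3 {d : ℕ} (K : ℝ) (u v : EuclideanSpace ℝ (Fin d) → ℝ)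
    (hu : ConcaveOn ℝ Set.univ fun y => u y - K * ‖y‖ ^ 2)
    (hv : ConcaveOn ℝ Set.univ fun y => -v y - K * ‖y‖ ^ 2)
    (x₀ : EuclideanSpace ℝ (Fin d)) (hx₀ : ∀ y, u x₀ - v x₀ ≤ u y - v y) :
    DifferentiableAt ℝ u x₀ ∧ DifferentiableAt ℝ v x₀ ∧
      fderiv ℝ u x₀ = fderiv ℝ v x₀ := by
  obtain ⟨p, hp⟩ := exists_supergradient hu x₀
  obtain ⟨q, hq⟩ := exists_supergradient hv x₀
  -- norm expansion
  have hnorm : ∀ y : EuclideanSpace ℝ (Fin d),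
      ‖y‖ ^ 2 = ‖x₀‖ ^ 2 + 2 * ⟪x₀, y - x₀⟫ + ‖y - x₀‖ ^ 2 := by
    intro y
    have h := norm_add_sq_real x₀ (y - x₀)
    rwa [add_sub_cancel] at h
  -- the sum of linear parts vanishes
  set L : EuclideanSpace ℝ (Fin d) →L[ℝ] ℝ := innerSL ℝ x₀ with hL
  have hsum : p + q + (4 * K) • L = 0 := by
    apply clm_eq_zero_of_quadratic_lower (C := 2 * |K|)
    intro z
    have h1 := hp (x₀ + z)
    have h2 := hq (x₀ + z)
    have h3 := hx₀ (x₀ + z)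
    rw [add_sub_cancel_left] at h1 h2
    have h4 := hnorm (x₀ + z)
    rw [add_sub_cancel_left] at h4
    rw [h4] at h1 h2
    have happ : (p + q + (4 * K) • L) z = p z + q z + 4 * K * ⟪x₀, z⟫ := by
      simp [hL, innerSL_apply_apply]
      try ring
    rw [happ]
    have e1 : 0 ≤ (|K| - K) * ‖z‖ ^ 2 :=
      mul_nonneg (by linarith [le_abs_self K]) (sq_nonneg _)
    have e2 : 0 ≤ (|K| + K) * ‖z‖ ^ 2 :=
      mul_nonneg (by linarith [neg_abs_le K]) (sq_nonneg _)
    ring_nf at h1 h2 h3 e1 e2 ⊢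
    linarith
  have hsum' : ∀ z, p z + q z + 4 * K * ⟪x₀, z⟫ = 0 := by
    intro z
    have h := congrFun (congrArg (fun (T : _ →L[ℝ] ℝ) => (T : _ → ℝ)) hsum) z
    simpa [hL, innerSL_apply_apply] using (by
      have : (p + q + (4 * K) • L) z = 0 := h
      simpa [hL, innerSL_apply_apply, mul_comm, mul_assoc, mul_left_comm] using this)
  -- derivative candidates
  set P : EuclideanSpace ℝ (Fin d) →L[ℝ] ℝ := p + (2 * K) • L with hP
  set Q : EuclideanSpace ℝ (Fin d) →L[ℝ] ℝ := -q - (2 * K) • L with hQ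
  have hPQ : P = Q := by
    ext z
    have := hsum' z
    simp only [hP, hQ, ContinuousLinearMap.add_apply, ContinuousLinearMap.neg_apply,
      ContinuousLinearMap.sub_apply, ContinuousLinearMap.smul_apply, smul_eq_mul, hL,
      innerSL_apply_apply]
    linarith [this]
  have hPapp : ∀ z, P z = p z + 2 * K * ⟪x₀, z⟫ := by
    intro z
    simp [hP, hL, innerSL_apply_apply]
    try ring
  have hQapp : ∀ z, Q z = -q z - 2 * K * ⟪x₀, z⟫ := by
    intro z
    simp [hQ, hL, innerSL_apply_apply]
    try ring
  have hU : HasFDerivAt u P x₀ := by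
    apply hasFDerivAt_of_quadratic_bound (C := |K|)
    intro y
    have h1 := hp y
    have h2 := hq y
    have h3 := hx₀ y
    have h4 := hnorm y
    rw [h4] at h1 h2
    rw [abs_le, hPapp (y - x₀)]
    have hs := hsum' (y - x₀)
    have e1 : 0 ≤ (|K| - K) * ‖y - x₀‖ ^ 2 :=
      mul_nonneg (by linarith [le_abs_self K]) (sq_nonneg _)
    have e2 : 0 ≤ (|K| + K) * ‖y - x₀‖ ^ 2 :=
      mul_nonneg (by linarith [neg_abs_le K]) (sq_nonneg _)
    constructor
    · ring_nf at h1 h2 h3 hs e1 e2 ⊢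
      linarith
    · ring_nf at h1 h2 h3 hs e1 e2 ⊢
      linarith
  have hV : HasFDerivAt v Q x₀ := by
    apply hasFDerivAt_of_quadratic_bound (C := |K|)
    intro y
    have h1 := hp y
    have h2 := hq y
    have h3 := hx₀ y
    have h4 := hnorm y
    rw [h4] at h1 h2
    rw [abs_le, hQapp (y - x₀)]
    have hs := hsum' (y - x₀)
    have e1 : 0 ≤ (|K| - K) * ‖y - x₀‖ ^ 2 :=
      mul_nonneg (by linarith [le_abs_self K]) (sq_nonneg _)
    have e2 : 0 ≤ (|K| + K) * ‖y - x₀‖ ^ 2 :=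
      mul_nonneg (by linarith [neg_abs_le K]) (sq_nonneg _)
    constructor
    · ring_nf at h1 h2 h3 hs e1 e2 ⊢
      linarith
    · ring_nf at h1 h2 h3 hs e1 e2 ⊢
      linarith
  exact ⟨hU.differentiableAt, hV.differentiableAt, by rw [hU.fderiv, hV.fderiv, hPQ]⟩
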